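/- Let χ(π) := (3π−1)/6. Then: (i) ζ(π) := (π+1)(χ(π)−π)·(1/2) + 2χ(π)(1−χ(π)) = −(27π² − 36π + 17)/36 < 0 for every π ∈ ℝ; and (ii) η(π) := (2π+1)χ(π) − π = (6π+1)(π−1)/6 < 0 for every π ∈ (0,1). Hence the compressibility conditions H1^G and H2^G fail throughout the energy-condition domain 0 < π < 1, so the Dabrowski solution cannot be interpreted as a physically admissible thermodynamic perfect fluid. -/
import Mathlib

noncomputable section

/-- The Dabrowski solution has indicatrix `χ(π) = (3π−1)/6` (whose derivative is the
constant `1/2`). Then `ζ(π) = (π+1)(χ−π)(1/2) + 2χ(1−χ) = −(27π²−36π+17)/36 < 0` for all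
real `π`, and `η(π) = (2π+1)χ − π = (6π+1)(π−1)/6 < 0` for all `π ∈ (0,1)`: the
compressibility conditions H1^G and H2^G fail throughout the energy-condition domain. -/
theorem dabrowski_not_thermodynamic :
    (∀ π : ℝ,
      (π + 1) * ((3 * π - 1) / 6 - π) * (1 / 2)
          + 2 * ((3 * π - 1) / 6) * (1 - (3 * π - 1) / 6)
        = -(27 * π ^ 2 - 36 * π + 17) / 36
      ∧ -(27 * π ^ 2 - 36 * π + 17) / 36 < 0)
    ∧ (∀ π : ℝ, 0 < π → π < 1 →
        (2 * π + 1) * ((3 * π - 1) / 6) - π = (6 * π + 1) * (π - 1) / 6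
        ∧ (6 * π + 1) * (π - 1) / 6 < 0) := by
  constructor
  · intro π
    refine ⟨by ring, ?_⟩
    nlinarith [sq_nonneg (3 * π - 2)]
  · intro π h0 h1
    refine ⟨by ring, ?_⟩
    have : (6 * π + 1) * (π - 1) < 0 :=
      mul_neg_of_pos_of_neg (by linarith) (by linarith)
    linarith
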